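/- arXiv:1109.3544 — 4 statements merged into one kernel-verified Lean document; each statement's English description precedes it below -/
import Mathlib

section
/- Let (I,J) be an instance of Generalized Bin Covering with unit supply, let O be an optimal solution, let I_S be the set of bins of O that are covered singularly (i.e., O_i = {j} for a single item j with s_j > d_i), and let J_S be the set of items assigned to the bins of I_S. Then the maximum weight of a matching in the bipartite graph G = (I ∪ J, E) with edge set E = {ij : s_j > d_i} and edge weight w_{ij} = p_i induces a feasible solution of (I,J) whose profit is at least OPT(I_S, J_S). -/
open scoped Classical

noncomputable section

namespace BinCov

/-- Profit of a solution `S` on the bin set `B`: a bin `i ∈ B` earns profit `p i`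
if the total size of the items assigned to it is at least its demand `d i`. -/
def profit (d p s : ℕ → ℝ) (B : Finset ℕ) (S : ℕ → Finset ℕ) : ℝ :=
  ∑ i ∈ B, if d i ≤ ∑ j ∈ S i, s j then p i else 0

/-- A solution assigns pairwise disjoint subsets of the item set `T` to the bins. -/
def IsSolution (T : Finset ℕ) (S : ℕ → Finset ℕ) : Prop :=
  (∀ i, S i ⊆ T) ∧ Pairwise fun i i' => Disjoint (S i) (S i')

/-- Optimal profit over all solutions on bins `B` and items `T`. -/
def OPT (d p s : ℕ → ℝ) (B T : Finset ℕ) : ℝ :=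
  sSup (profit d p s B '' {S | IsSolution T S})

/-- Take a minimal prefix of `items` whose total size reaches `dem`;
returns this prefix together with the remaining items. -/
def takeFill (s : ℕ → ℝ) : ℝ → List ℕ → List ℕ × List ℕ
  | _, [] => ([], [])
  | dem, j :: rest =>
    if dem ≤ s j then ([j], rest)
    else
      let q := takeFill s (dem - s j) rest
      (j :: q.1, q.2)

/-- Next Fit Decreasing on the list `bins` of bins and the list `items` of still
unassigned items (both by index, i.e. in non-increasing order of demand resp. size):
if the unassigned items cannot cover the current bin, it is left empty; otherwise a
minimal prefix of the unassigned items is assigned to it.  Returns, for each bin,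
the set of items assigned to it. -/
def nfdAux (d s : ℕ → ℝ) : List ℕ → List ℕ → ℕ → Finset ℕ
  | [], _, _ => ∅
  | i :: bins, items, b =>
    if d i ≤ (items.map s).sum then
      let q := takeFill s (d i) items
      if b = i then q.1.toFinset else nfdAux d s bins q.2 b
    else
      if b = i then ∅ else nfdAux d s bins items b

/-- The solution produced by NFD on bin set `B` and item set `T` (bins and items are
processed in increasing order of index; demands and sizes are non-increasing in the index). -/
def nfdSol (d s : ℕ → ℝ) (B T : Finset ℕ) : ℕ → Finset ℕ :=
  nfdAux d s (B.sort (· ≤ ·)) (T.sort (· ≤ ·))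

/-- The total size `u i` that NFD assigns to bin `i`. -/
def nfdU (d s : ℕ → ℝ) (B T : Finset ℕ) (i : ℕ) : ℝ :=
  ∑ j ∈ nfdSol d s B T i, s j

/-- The profit NFD earns (Variable-Sized Bin Covering: the profit of a bin is its demand). -/
def NFD (d s : ℕ → ℝ) (B T : Finset ℕ) : ℝ :=
  profit d d s B (nfdSol d s B T)

/-- A bin `istar` with `u istar > 0` in NFD's solution (bins `0,…,m-1`, items `T`) is
well-covered if for the smallest index `i' > istar` with `u i' = 0` (which must exist)
one has `u i ≤ 2 * d i` for all bins `i ≤ i'`. -/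
def WellCovered (d s : ℕ → ℝ) (m : ℕ) (T : Finset ℕ) (istar : ℕ) : Prop :=
  istar < m ∧ 0 < nfdU d s (Finset.range m) T istar ∧
    ∃ i', istar < i' ∧ i' < m ∧ nfdU d s (Finset.range m) T i' = 0 ∧
      (∀ i, istar < i → i < i' → nfdU d s (Finset.range m) T i ≠ 0) ∧
      ∀ i ≤ i', nfdU d s (Finset.range m) T i ≤ 2 * d i

/-- `istar` is the head of the instance: letting `i0` be the smallest index of a non-empty
bin of NFD's solution that is not well-covered, and `i1 ≥ i0` the smallest index with
`u (i1+1) = 0`, the head is the largest index `istar ≤ i1` with `u istar > 2 * d istar`. -/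
def IsHead (d s : ℕ → ℝ) (m : ℕ) (T : Finset ℕ) (istar : ℕ) : Prop :=
  ∃ i0 i1,
    i0 < m ∧ 0 < nfdU d s (Finset.range m) T i0 ∧ ¬ WellCovered d s m T i0 ∧
    (∀ i < i0, 0 < nfdU d s (Finset.range m) T i → WellCovered d s m T i) ∧
    i0 ≤ i1 ∧ nfdU d s (Finset.range m) T (i1 + 1) = 0 ∧
    (∀ i, i0 ≤ i → i < i1 → nfdU d s (Finset.range m) T (i + 1) ≠ 0) ∧
    istar ≤ i1 ∧ 2 * d istar < nfdU d s (Finset.range m) T istar ∧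
    (∀ i ≤ i1, 2 * d i < nfdU d s (Finset.range m) T i → i ≤ istar)

/-- The inner loop of `ALG*` on one bin: `dcap` is the bin's demand (items are admissible iff
their size is at most `dcap`), `space` is the part of the demand not yet covered, and `rem j`
is the still unassigned part of item `j` (items `0,…,n-1`, sizes non-increasing in the index).
While the bin is not covered and some admissible item is not fully assigned, the largest such
item (i.e. the one of smallest index) is taken and its remaining part is assigned to the bin,
splitting it so that the bin is exactly covered if it would overflow.
Returns the updated remainders together with the total amount assigned to the bin. -/
def fillBin (s : ℕ → ℝ) (n : ℕ) (dcap : ℝ) : ℕ → ℝ → (ℕ → ℝ) → (ℕ → ℝ) × ℝ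
  | 0, _, rem => (rem, 0)
  | fuel + 1, space, rem =>
    if h : ∃ j, j < n ∧ s j ≤ dcap ∧ 0 < rem j then
      let j := Nat.find h
      if rem j ≤ space then
        let q := fillBin s n dcap fuel (space - rem j) (Function.update rem j 0)
        (q.1, q.2 + rem j)
      else
        (Function.update rem j (rem j - space), space)
    else (rem, 0)

/-- The outer loop of `ALG*`: the bins are processed in the given order (non-increasing
efficiency); returns the total amount assigned to each bin. -/
def algStarFillAux (d s : ℕ → ℝ) (n : ℕ) : List ℕ → (ℕ → ℝ) → ℕ → ℝ
  | [], _, _ => 0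
  | i :: bins, rem, b =>
    let q := fillBin s n (d i) n (d i) rem
    if b = i then q.2 else algStarFillAux d s n bins q.1 b

/-- The total amount `ALG*` assigns to each bin, on the instance with bins `0,…,m-1`
(in non-increasing order of efficiency) and items `0,…,n-1` (in non-increasing order of size). -/
def algStarFill (m n : ℕ) (d s : ℕ → ℝ) : ℕ → ℝ :=
  algStarFillAux d s n (List.range m) fun j => if j < n then s j else 0

/-- The modified profit `p*` of the solution produced by `ALG*`. -/
def algStarPStar (m n : ℕ) (d p s : ℕ → ℝ) : ℝ :=
  ∑ i ∈ Finset.range m, p i * min (algStarFill m n d s i / d i) 1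

/-- The optimum of the linear program for the modified Bin Covering problem. -/
def LPOpt (m n : ℕ) (d p s : ℕ → ℝ) : ℝ :=
  sSup {v : ℝ | ∃ y : ℕ → ℝ, ∃ x : ℕ → ℕ → ℝ,
    (∀ i < m, y i ≤ (∑ j ∈ Finset.range n, x j i) / d i) ∧
    (∀ j < n, ∑ i ∈ Finset.range m, x j i ≤ s j) ∧
    (∀ i, 0 ≤ y i ∧ y i ≤ 1) ∧
    (∀ j i, 0 ≤ x j i) ∧
    (∀ j < n, ∀ i < m, d i < s j → x j i = 0) ∧
    v = ∑ i ∈ Finset.range m, p i * y i}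

/-- A solution of the modified Bin Covering problem, assigning item parts from the
finite set `P` (part `q ∈ P` belongs to item `itm q`) to the bins `0,…,m-1`;
a part may only be assigned to a bin to which its item is admissible. -/
def IsPartSolution (m : ℕ) (d s : ℕ → ℝ) (itm : ℕ → ℕ) (P : Finset ℕ) (S : ℕ → Finset ℕ) : Prop :=
  (∀ i, S i ⊆ P) ∧ (Pairwise fun i i' => Disjoint (S i) (S i')) ∧
  (∀ i < m, ∀ q ∈ S i, s (itm q) ≤ d i) ∧ (∀ i, m ≤ i → S i = ∅)

/-- The modified profit `p*` of a solution, where `psz q` is the size of part `q`. -/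
def pStarParts (m : ℕ) (d p psz : ℕ → ℝ) (S : ℕ → Finset ℕ) : ℝ :=
  ∑ i ∈ Finset.range m, p i * min ((∑ q ∈ S i, psz q) / d i) 1

/-- A solution of the modified Bin Covering problem is maximal if there are no two distinct
bins `i`, `i'` with `0 < s(S_i) < d_i`, `0 < s(S_i') < d_i'` and `e_i ≤ e_i'` such that
some item of `S_i` is admissible to bin `i'`. -/
def MaximalMod (m : ℕ) (d p s : ℕ → ℝ) (S : ℕ → Finset ℕ) : Prop :=
  ¬ ∃ i i', i < m ∧ i' < m ∧ i ≠ i' ∧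
      (0 < ∑ j ∈ S i, s j) ∧ (∑ j ∈ S i, s j) < d i ∧
      (0 < ∑ j ∈ S i', s j) ∧ (∑ j ∈ S i', s j) < d i' ∧
      p i / d i ≤ p i' / d i' ∧ ∃ j ∈ S i, s j ≤ d i'

/-- A solution induced by a matching in the bipartite graph on bins and items with an
edge `ij` whenever `s j > d i`: every bin receives at most one item, and any item
assigned to a bin covers it singularly. -/
def IsMatchingSol (m n : ℕ) (d s : ℕ → ℝ) (S : ℕ → Finset ℕ) : Prop :=
  IsSolution (Finset.range n) S ∧ (∀ i, (S i).card ≤ 1) ∧ ∀ i < m, ∀ j ∈ S i, d i < s j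

end BinCov

namespace BinCov

/- STATEMENT 1 -/
theorem stmt1 (m n : ℕ) (d p s : ℕ → ℝ)
    (hd : ∀ i < m, 0 < d i) (hp : ∀ i < m, 0 < p i) (hs : ∀ j < n, 0 < s j)
    (O : ℕ → Finset ℕ) (hO : IsSolution (Finset.range n) O)
    (hOopt : profit d p s (Finset.range m) O = OPT d p s (Finset.range m) (Finset.range n)) :
    ∃ S, IsMatchingSol m n d s S ∧
      (∀ S', IsMatchingSol m n d s S' →
        profit d p s (Finset.range m) S' ≤ profit d p s (Finset.range m) S) ∧
      OPT d p s ((Finset.range m).filter fun i => ∃ j, O i = {j} ∧ d i < s j)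
          (((Finset.range m).filter fun i => ∃ j, O i = {j} ∧ d i < s j).biUnion O)
        ≤ profit d p s (Finset.range m) S := by
  classical
  set IS : Finset ℕ := (Finset.range m).filter fun i => ∃ j, O i = {j} ∧ d i < s j with hIS
  have hEmpty : IsMatchingSol m n d s fun _ => ∅ := by
    refine ⟨⟨fun i => Finset.empty_subset _, fun i i' _ => Finset.disjoint_empty_left _⟩,
      fun i => by simp, fun i _ j hj => absurd hj (Finset.notMem_empty j)⟩
  set V : Set ℝ := (fun S' => profit d p s (Finset.range m) S') '' {S' | IsMatchingSol m n d s S'}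
    with hV
  have hVne : V.Nonempty := ⟨_, ⟨_, hEmpty, rfl⟩⟩
  have hVfin : V.Finite := by
    apply Set.Finite.subset
      ((((Finset.range m).powerset).image fun A => ∑ i ∈ A, p i).finite_toSet)
    rintro v ⟨S', -, rfl⟩
    simp only [Finset.coe_image, Set.mem_image, Finset.mem_coe, Finset.mem_powerset]
    refine ⟨(Finset.range m).filter fun i => d i ≤ ∑ j ∈ S' i, s j, Finset.filter_subset _ _, ?_⟩
    rw [Finset.sum_filter]; rfl
  obtain ⟨v, hvV, hvmax⟩ := Set.Finite.exists_maximalFor id V hVfin hVne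
  have hmax : ∀ w ∈ V, w ≤ v := by
    intro w hw
    by_contra hlt
    push_neg at hlt
    exact absurd (hvmax hw hlt.le) (not_le.mpr hlt)
  obtain ⟨S, hS, hSv⟩ := hvV
  refine ⟨S, hS, ?_, ?_⟩
  · intro S' hS'
    have := hmax _ ⟨S', hS', rfl⟩
    simpa [hSv] using this
  · -- the matching induced by O on the singularly covered bins
    set O' : ℕ → Finset ℕ := fun i => if i ∈ IS then O i else ∅ with hO'
    have hO'sub : ∀ i, O' i ⊆ O i := by
      intro i; by_cases h : i ∈ IS <;> simp [hO', h]
    have hO'M : IsMatchingSol m n d s O' := by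
      refine ⟨⟨fun i => (hO'sub i).trans (hO.1 i),
        fun i i' h => Disjoint.mono (hO'sub i) (hO'sub i') (hO.2 h)⟩, ?_, ?_⟩
      · intro i; by_cases h : i ∈ IS
        · obtain ⟨j, hj, -⟩ := (Finset.mem_filter.mp h).2
          simp [hO', h, hj]
        · simp [hO', h]
      · intro i hi j hj
        by_cases h : i ∈ IS
        · obtain ⟨j', hj', hlt⟩ := (Finset.mem_filter.mp h).2
          simp only [hO', if_pos h, hj', Finset.mem_singleton] at hj
          subst hj; exact hlt
        · simp [hO', h] at hj
    have hprofO' : profit d p s (Finset.range m) O' = ∑ i ∈ IS, p i := by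
      rw [profit]
      rw [← Finset.sum_subset (Finset.filter_subset _ (Finset.range m) :
        IS ⊆ Finset.range m)]
      · refine Finset.sum_congr rfl fun i hi => ?_
        obtain ⟨j, hj, hlt⟩ := (Finset.mem_filter.mp hi).2
        rw [hO']
        simp [hi, hj, hlt.le]
      · intro i hi hni
        have h0 : 0 < d i := hd i (Finset.mem_range.mp hi)
        have hni' : i ∉ IS := hni
        simp [hO', hni', not_le.mpr h0]
    have hO'le : ∑ i ∈ IS, p i ≤ profit d p s (Finset.range m) S := by
      rw [← hprofO']
      exact (hmax _ ⟨O', hO'M, rfl⟩).trans hSv.ge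
    refine le_trans ?_ hO'le
    apply csSup_le
    · exact ⟨_, ⟨fun _ => ∅,
        ⟨fun i => Finset.empty_subset _, fun i i' _ => Finset.disjoint_empty_left _⟩, rfl⟩⟩
    · rintro w ⟨S'', -, rfl⟩
      apply Finset.sum_le_sum
      intro i hi
      have hpi : 0 < p i := hp i (Finset.mem_range.mp (Finset.mem_filter.mp hi).1)
      split_ifs
      · exact le_rfl
      · exact hpi.le

end BinCov
end
end

section
/- For every instance (I,J), the solution produced by algorithm ALG* is an optimal solution of the modified Bin Covering problem; that is, its modified profit equals OPT*(I,J), the optimum of the linear program: maximize Σ_i p_i y_i subject to y_i ≤ Σ_j x_{j,i}/d_i for all i, Σ_i x_{j,i} ≤ s_j for all j, 0 ≤ y_i ≤ 1 for all i, x_{j,i} ≥ 0 for all i,j, and x_{j,i} = 0 whenever s_j > d_i. -/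
open scoped Classical

noncomputable section

namespace BinCov

variable {s : ℕ → ℝ} {n : ℕ} {dcap : ℝ}

lemma fillBin_succ_pos {fuel : ℕ} {space : ℝ} {rem : ℕ → ℝ}
    (h : ∃ j, j < n ∧ s j ≤ dcap ∧ 0 < rem j) (hle : rem (Nat.find h) ≤ space) :
    fillBin s n dcap (fuel+1) space rem =
    ((fillBin s n dcap fuel (space - rem (Nat.find h)) (Function.update rem (Nat.find h) 0)).1,
     (fillBin s n dcap fuel (space - rem (Nat.find h)) (Function.update rem (Nat.find h) 0)).2
       + rem (Nat.find h)) := by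
  show (if h : _ then _ else _) = _
  rw [dif_pos h]
  simp only [if_pos hle]

lemma fillBin_succ_split {fuel : ℕ} {space : ℝ} {rem : ℕ → ℝ}
    (h : ∃ j, j < n ∧ s j ≤ dcap ∧ 0 < rem j) (hle : ¬ rem (Nat.find h) ≤ space) :
    fillBin s n dcap (fuel+1) space rem =
    (Function.update rem (Nat.find h) (rem (Nat.find h) - space), space) := by
  show (if h : _ then _ else _) = _
  rw [dif_pos h]
  simp only [if_neg hle]

lemma fillBin_succ_none {fuel : ℕ} {space : ℝ} {rem : ℕ → ℝ}
    (h : ¬ ∃ j, j < n ∧ s j ≤ dcap ∧ 0 < rem j) :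
    fillBin s n dcap (fuel+1) space rem = (rem, 0) := by
  show (if h : _ then _ else _) = _
  rw [dif_neg h]

end BinCov

namespace BinCov
variable {s : ℕ → ℝ} {n : ℕ} {dcap : ℝ}

lemma fillBin_spec : ∀ (fuel : ℕ) (space : ℝ) (rem : ℕ → ℝ), 0 ≤ space → (∀ j, 0 ≤ rem j) →
    (∀ j, 0 ≤ (fillBin s n dcap fuel space rem).1 j ∧ (fillBin s n dcap fuel space rem).1 j ≤ rem j) ∧
    (∀ j, ¬(j < n ∧ s j ≤ dcap) → (fillBin s n dcap fuel space rem).1 j = rem j) ∧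
    (fillBin s n dcap fuel space rem).2 = ∑ j ∈ Finset.range n, (rem j - (fillBin s n dcap fuel space rem).1 j) ∧
    (fillBin s n dcap fuel space rem).2 ≤ space ∧
    (∀ j j', j < j' → j < n → s j ≤ dcap → j' < n → s j' ≤ dcap → 0 < (fillBin s n dcap fuel space rem).1 j →
      (fillBin s n dcap fuel space rem).1 j' = rem j') := by
  intro fuel
  induction fuel with
  | zero =>
    intro space rem hsp hrem
    refine ⟨fun j => ⟨hrem j, le_refl _⟩, fun j _ => rfl, ?_, hsp, fun j j' _ _ _ _ _ _ => rfl⟩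
    simp [fillBin]
  | succ fuel ih =>
    intro space rem hsp hrem
    by_cases h : ∃ j, j < n ∧ s j ≤ dcap ∧ 0 < rem j
    · have hj0spec : Nat.find h < n ∧ s (Nat.find h) ≤ dcap ∧ 0 < rem (Nat.find h) := Nat.find_spec h
      set j0 := Nat.find h with hj0def
      have hj0min : ∀ j, j < j0 → j < n → s j ≤ dcap → rem j = 0 := by
        intro j hj hjn hjs
        have := Nat.find_min h hj
        push_neg at this
        exact le_antisymm (this hjn hjs) (hrem j)
      by_cases hle : rem j0 ≤ space
      · rw [fillBin_succ_pos h hle]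
        set rem' := Function.update rem j0 0 with hrem'def
        have hrem' : ∀ j, 0 ≤ rem' j := by
          intro j
          rcases eq_or_ne j j0 with rfl | hne
          · simp [hrem'def]
          · simp [hrem'def, Function.update_of_ne hne, hrem j]
        have hrem'le : ∀ j, rem' j ≤ rem j := by
          intro j
          rcases eq_or_ne j j0 with rfl | hne
          · simp [hrem'def]; exact le_of_lt hj0spec.2.2
          · simp [hrem'def, Function.update_of_ne hne]
        obtain ⟨ih1, ih2, ih3, ih4, ih5⟩ := ih (space - rem j0) rem' (by linarith) hrem'
        set q := fillBin s n dcap fuel (space - rem j0) rem' with hqdef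
        have hq0 : q.1 j0 = 0 := by
          refine le_antisymm ?_ (ih1 j0).1
          have := (ih1 j0).2
          simpa [hrem'def] using this
        refine ⟨?_, ?_, ?_, ?_, ?_⟩
        · exact fun j => ⟨(ih1 j).1, le_trans (ih1 j).2 (hrem'le j)⟩
        · intro j hj
          rw [ih2 j hj, hrem'def, Function.update_of_ne]
          intro hc; subst hc; exact hj ⟨hj0spec.1, hj0spec.2.1⟩
        · show q.2 + rem j0 = _
          rw [ih3]
          have hsum : ∑ j ∈ Finset.range n, (rem j - q.1 j)
              = ∑ j ∈ Finset.range n, (rem' j - q.1 j) + ∑ j ∈ Finset.range n, (rem j - rem' j) := by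
            rw [← Finset.sum_add_distrib]
            congr 1; ext j; ring
          rw [hsum]
          have : ∑ j ∈ Finset.range n, (rem j - rem' j) = rem j0 := by
            rw [Finset.sum_eq_single_of_mem j0 (Finset.mem_range.2 hj0spec.1)]
            · simp [hrem'def]
            · intro j _ hne
              simp [hrem'def, Function.update_of_ne hne]
          rw [this]
        · show q.2 + rem j0 ≤ space
          linarith [ih4]
        · intro j j' hjj' hjn hjs hj'n hj's hpos
          have hjne : j ≠ j0 := by
            intro hc; rw [hc] at hpos; rw [hq0] at hpos; exact lt_irrefl _ hpos
          have hj'ne : j' ≠ j0 := by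
            intro hc
            have hjlt : j < j0 := hc ▸ hjj'
            have : rem j = 0 := hj0min j hjlt hjn hjs
            have h1 : q.1 j ≤ rem' j := (ih1 j).2
            rw [hrem'def] at h1
            rw [Function.update_of_ne hjne] at h1
            rw [this] at h1
            linarith
          rw [ih5 j j' hjj' hjn hjs hj'n hj's hpos, hrem'def, Function.update_of_ne hj'ne]
      · rw [fillBin_succ_split h hle]
        push_neg at hle
        refine ⟨?_, ?_, ?_, le_refl _, ?_⟩
        · intro j
          rcases eq_or_ne j j0 with rfl | hne
          · constructor
            · simp only [← hj0def, Function.update_self]; linarith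
            · simp only [← hj0def, Function.update_self]; linarith
          · constructor
            · show (0:ℝ) ≤ Function.update rem j0 (rem j0 - space) j
              rw [Function.update_of_ne hne]; exact hrem j
            · show Function.update rem j0 (rem j0 - space) j ≤ rem j
              rw [Function.update_of_ne hne]
        · intro j hj
          show Function.update rem j0 (rem j0 - space) j = rem j
          rw [Function.update_of_ne]
          intro hc; subst hc; exact hj ⟨hj0spec.1, hj0spec.2.1⟩
        · show space = _
          rw [Finset.sum_eq_single_of_mem j0 (Finset.mem_range.2 hj0spec.1)]
          · simp [← hj0def]
          · intro j _ hne
            simp [← hj0def, Function.update_of_ne hne]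
        · intro j j' hjj' hjn hjs hj'n hj's hpos
          have hpos' : 0 < Function.update rem j0 (rem j0 - space) j := hpos
          have hj'ne : j' ≠ j0 := by
            intro hc
            subst hc
            have hjne : j ≠ j0 := Nat.ne_of_lt hjj'
            rw [Function.update_of_ne hjne] at hpos'
            have := hj0min j hjj' hjn hjs
            linarith
          show Function.update rem j0 (rem j0 - space) j' = rem j'
          rw [Function.update_of_ne hj'ne]
    · rw [fillBin_succ_none h]
      refine ⟨fun j => ⟨hrem j, le_refl _⟩, fun j _ => rfl, ?_, hsp, fun j j' _ _ _ _ _ _ => rfl⟩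
      simp

end BinCov

namespace BinCov
variable {s : ℕ → ℝ} {n : ℕ} {dcap : ℝ}

lemma fillBin_complete : ∀ (fuel : ℕ) (space : ℝ) (rem : ℕ → ℝ), (∀ j, 0 ≤ rem j) →
    ((Finset.range n).filter (fun j => s j ≤ dcap ∧ 0 < rem j)).card ≤ fuel →
    (fillBin s n dcap fuel space rem).2 = space ∨
      ∀ j, j < n → s j ≤ dcap → (fillBin s n dcap fuel space rem).1 j = 0 := by
  intro fuel
  induction fuel with
  | zero =>
    intro space rem hrem hcard
    right
    intro j hjn hjs
    have hempty : ((Finset.range n).filter (fun j => s j ≤ dcap ∧ 0 < rem j)) = ∅ :=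
      Finset.card_eq_zero.1 (Nat.le_zero.1 hcard)
    have : j ∉ (Finset.range n).filter (fun j => s j ≤ dcap ∧ 0 < rem j) := by
      rw [hempty]; exact Finset.notMem_empty j
    rw [Finset.mem_filter] at this
    push_neg at this
    have h2 := this (Finset.mem_range.2 hjn)
    show rem j = 0
    exact le_antisymm (h2 hjs) (hrem j)
  | succ fuel ih =>
    intro space rem hrem hcard
    by_cases h : ∃ j, j < n ∧ s j ≤ dcap ∧ 0 < rem j
    · have hj0spec : Nat.find h < n ∧ s (Nat.find h) ≤ dcap ∧ 0 < rem (Nat.find h) := Nat.find_spec h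
      set j0 := Nat.find h with hj0def
      by_cases hle : rem j0 ≤ space
      · rw [fillBin_succ_pos h hle]
        set rem' := Function.update rem j0 0 with hrem'def
        have hrem' : ∀ j, 0 ≤ rem' j := by
          intro j
          rcases eq_or_ne j j0 with rfl | hne
          · simp [hrem'def]
          · simp [hrem'def, Function.update_of_ne hne, hrem j]
        have hfilter : (Finset.range n).filter (fun j => s j ≤ dcap ∧ 0 < rem' j)
            = ((Finset.range n).filter (fun j => s j ≤ dcap ∧ 0 < rem j)).erase j0 := by
          ext j
          simp only [Finset.mem_filter, Finset.mem_erase, Finset.mem_range]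
          constructor
          · rintro ⟨hjn, hjs, hjpos⟩
            have hne : j ≠ j0 := by
              intro hc; subst hc
              simp [hrem'def] at hjpos
            rw [hrem'def, Function.update_of_ne hne] at hjpos
            exact ⟨hne, hjn, hjs, hjpos⟩
          · rintro ⟨hne, hjn, hjs, hjpos⟩
            rw [hrem'def]
            exact ⟨hjn, hjs, by rw [Function.update_of_ne hne]; exact hjpos⟩
        have hmem : j0 ∈ (Finset.range n).filter (fun j => s j ≤ dcap ∧ 0 < rem j) := by
          rw [Finset.mem_filter]
          exact ⟨Finset.mem_range.2 hj0spec.1, hj0spec.2.1, hj0spec.2.2⟩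
        have hcard' : ((Finset.range n).filter (fun j => s j ≤ dcap ∧ 0 < rem' j)).card ≤ fuel := by
          rw [hfilter, Finset.card_erase_of_mem hmem]
          omega
        rcases ih (space - rem j0) rem' hrem' hcard' with h1 | h1
        · left
          show (fillBin s n dcap fuel (space - rem j0) rem').2 + rem j0 = space
          rw [h1]; ring
        · right
          exact fun j hjn hjs => h1 j hjn hjs
      · left
        rw [fillBin_succ_split h hle]
    · rw [fillBin_succ_none h]
      right
      intro j hjn hjs
      push_neg at h
      exact le_antisymm (h j hjn hjs) (hrem j)

end BinCov

namespace BinCov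

lemma algStarFillAux_nil (d s : ℕ → ℝ) (n : ℕ) (rem : ℕ → ℝ) (b : ℕ) :
    algStarFillAux d s n [] rem b = 0 := rfl

lemma algStarFillAux_cons (d s : ℕ → ℝ) (n : ℕ) (i : ℕ) (bins : List ℕ) (rem : ℕ → ℝ) (b : ℕ) :
    algStarFillAux d s n (i :: bins) rem b =
      if b = i then (fillBin s n (d i) n (d i) rem).2
      else algStarFillAux d s n bins (fillBin s n (d i) n (d i) rem).1 b := rfl

lemma algStarFillAux_shift (d s : ℕ → ℝ) (n : ℕ) :
    ∀ (L : List ℕ) (rem : ℕ → ℝ) (b : ℕ),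
      algStarFillAux d s n (L.map Nat.succ) rem (b + 1)
        = algStarFillAux (fun k => d (k + 1)) s n L rem b := by
  intro L
  induction L with
  | nil => intro rem b; rfl
  | cons i L ihL =>
    intro rem b
    rw [List.map_cons, algStarFillAux_cons, algStarFillAux_cons]
    by_cases hb : b = i
    · subst hb
      rw [if_pos rfl, if_pos rfl]
    · rw [if_neg (by omega), if_neg hb, ihL]

lemma fill_succ_zero (d s : ℕ → ℝ) (n m : ℕ) (rem : ℕ → ℝ) :
    algStarFillAux d s n (List.range (m+1)) rem 0 = (fillBin s n (d 0) n (d 0) rem).2 := by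
  rw [List.range_succ_eq_map, algStarFillAux_cons, if_pos rfl]

lemma fill_succ_succ (d s : ℕ → ℝ) (n m : ℕ) (rem : ℕ → ℝ) (i : ℕ) :
    algStarFillAux d s n (List.range (m+1)) rem (i+1)
      = algStarFillAux (fun k => d (k+1)) s n (List.range m) (fillBin s n (d 0) n (d 0) rem).1 i := by
  rw [List.range_succ_eq_map, algStarFillAux_cons, if_neg (by omega), algStarFillAux_shift]

def VsetG (m n : ℕ) (d p s rem : ℕ → ℝ) : Set ℝ :=
  {v : ℝ | ∃ y : ℕ → ℝ, ∃ x : ℕ → ℕ → ℝ,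
    (∀ i < m, y i ≤ (∑ j ∈ Finset.range n, x j i) / d i) ∧
    (∀ j < n, ∑ i ∈ Finset.range m, x j i ≤ rem j) ∧
    (∀ i, 0 ≤ y i ∧ y i ≤ 1) ∧
    (∀ j i, 0 ≤ x j i) ∧
    (∀ j < n, ∀ i < m, d i < s j → x j i = 0) ∧
    v = ∑ i ∈ Finset.range m, p i * y i}

end BinCov

namespace BinCov

lemma weak_duality {m n : ℕ} {d p s rem : ℕ → ℝ} {v : ℝ}
    (hv : v ∈ VsetG m n d p s rem)
    (hd : ∀ i < m, 0 < d i) (hrem : ∀ j, 0 ≤ rem j)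
    (α β γ : ℕ → ℝ)
    (hα : ∀ i < m, 0 ≤ α i) (hβ : ∀ i < m, 0 ≤ β i) (hγ : ∀ j < n, 0 ≤ γ j)
    (hfeas1 : ∀ i < m, p i ≤ α i * d i + β i)
    (hfeas2 : ∀ j < n, ∀ i < m, s j ≤ d i → α i ≤ γ j) :
    v ≤ ∑ i ∈ Finset.range m, β i + ∑ j ∈ Finset.range n, γ j * rem j := by
  obtain ⟨y, x, hyx, hitem, hy01, hxnn, hadm, hval⟩ := hv
  have step1 : v ≤ ∑ i ∈ Finset.range m, (α i * (d i * y i) + β i) := by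
    rw [hval]
    apply Finset.sum_le_sum
    intro i hi
    rw [Finset.mem_range] at hi
    have h1 : p i * y i ≤ (α i * d i + β i) * y i :=
      mul_le_mul_of_nonneg_right (hfeas1 i hi) (hy01 i).1
    have h2 : (α i * d i + β i) * y i ≤ α i * (d i * y i) + β i := by
      have : β i * y i ≤ β i := by
        nlinarith [(hy01 i).1, (hy01 i).2, hβ i hi]
      nlinarith
    linarith
  have step2 : ∑ i ∈ Finset.range m, (α i * (d i * y i) + β i)
      ≤ ∑ i ∈ Finset.range m, β i + ∑ i ∈ Finset.range m, α i * ∑ j ∈ Finset.range n, x j i := by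
    rw [← Finset.sum_add_distrib]
    apply Finset.sum_le_sum
    intro i hi
    rw [Finset.mem_range] at hi
    have hdy : d i * y i ≤ ∑ j ∈ Finset.range n, x j i := by
      have := hyx i hi
      rw [le_div_iff₀ (hd i hi)] at this
      linarith
    have := mul_le_mul_of_nonneg_left hdy (hα i hi)
    linarith
  have step3 : ∑ i ∈ Finset.range m, α i * ∑ j ∈ Finset.range n, x j i
      ≤ ∑ j ∈ Finset.range n, γ j * rem j := by
    have hswap : ∑ i ∈ Finset.range m, α i * ∑ j ∈ Finset.range n, x j i
        = ∑ j ∈ Finset.range n, ∑ i ∈ Finset.range m, α i * x j i := by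
      rw [Finset.sum_comm]
      congr 1
      ext i
      rw [Finset.mul_sum]
    rw [hswap]
    apply Finset.sum_le_sum
    intro j hj
    rw [Finset.mem_range] at hj
    have h1 : ∑ i ∈ Finset.range m, α i * x j i ≤ ∑ i ∈ Finset.range m, γ j * x j i := by
      apply Finset.sum_le_sum
      intro i hi
      rw [Finset.mem_range] at hi
      by_cases hs : s j ≤ d i
      · exact mul_le_mul_of_nonneg_right (hfeas2 j hj i hi hs) (hxnn j i)
      · rw [hadm j hj i hi (not_le.1 hs)]
        simp
    have h2 : ∑ i ∈ Finset.range m, γ j * x j i = γ j * ∑ i ∈ Finset.range m, x j i := by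
      rw [Finset.mul_sum]
    have h3 : γ j * ∑ i ∈ Finset.range m, x j i ≤ γ j * rem j :=
      mul_le_mul_of_nonneg_left (hitem j hj) (hγ j hj)
    linarith
  linarith

lemma primal_mem (n : ℕ) (s : ℕ → ℝ) : ∀ (m : ℕ) (d p rem : ℕ → ℝ),
    (∀ i < m, 0 < d i) → (∀ j, 0 ≤ rem j) →
    (∑ i ∈ Finset.range m, p i * (algStarFillAux d s n (List.range m) rem i / d i))
      ∈ VsetG m n d p s rem := by
  intro m
  induction m with
  | zero =>
    intro d p rem hd hrem
    refine ⟨fun _ => 0, fun _ _ => 0, ?_, ?_, ?_, ?_, ?_, ?_⟩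
    · intro i hi; omega
    · intro j hj; simpa using hrem j
    · intro i; exact ⟨le_refl _, zero_le_one⟩
    · intro j i; exact le_refl _
    · intro j hj i hi; omega
    · simp
  | succ m ihm =>
    intro d p rem hd hrem
    have hd0 : 0 < d 0 := hd 0 (Nat.succ_pos m)
    obtain ⟨hF1, hF2, hF3, hF4, _⟩ :=
      fillBin_spec (s := s) (n := n) (dcap := d 0) n (d 0) rem (le_of_lt hd0) hrem
    set q := fillBin s n (d 0) n (d 0) rem with hqdef
    have hrem' : ∀ j, 0 ≤ q.1 j := fun j => (hF1 j).1
    obtain ⟨y, x, hyx, hitem, hy01, hxnn, hadm, hval⟩ :=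
      ihm (fun k => d (k+1)) (fun k => p (k+1)) q.1
        (fun i hi => hd (i+1) (by omega)) hrem'
    refine ⟨fun i => if i = 0 then q.2 / d 0 else y (i-1),
            fun j i => if i = 0 then rem j - q.1 j else x j (i-1), ?_, ?_, ?_, ?_, ?_, ?_⟩
    · intro i hi
      beta_reduce
      rcases Nat.eq_zero_or_pos i with rfl | hipos
      · have hsum0 : (∑ j ∈ Finset.range n, if (0:ℕ) = 0 then rem j - q.1 j else x j (0-1)) = q.2 := by
          rw [hF3]
          apply Finset.sum_congr rfl
          intro j _
          simp
        rw [hsum0]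
        simp
      · obtain ⟨i', rfl⟩ : ∃ i', i = i' + 1 := ⟨i - 1, by omega⟩
        have h2 : (∑ j ∈ Finset.range n, if i' + 1 = 0 then rem j - q.1 j else x j (i'+1-1))
            = ∑ j ∈ Finset.range n, x j i' := by
          apply Finset.sum_congr rfl
          intro j _
          simp
        rw [h2, if_neg (Nat.succ_ne_zero i')]
        simpa using hyx i' (by omega)
    · intro j hj
      beta_reduce
      rw [Finset.sum_range_succ']
      have := hitem j hj
      simp only [Nat.add_sub_cancel, Nat.succ_ne_zero, if_false, if_true, reduceIte]
      linarith
    · intro i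
      beta_reduce
      rcases Nat.eq_zero_or_pos i with rfl | hipos
      · rw [if_pos rfl]
        have hq2 : 0 ≤ q.2 := by
          rw [hF3]
          apply Finset.sum_nonneg
          intro j _
          linarith [(hF1 j).2, (hF1 j).1]
        constructor
        · exact div_nonneg hq2 hd0.le
        · rw [div_le_one hd0]; exact hF4
      · rw [if_neg (by omega)]; exact hy01 _
    · intro j i
      beta_reduce
      rcases Nat.eq_zero_or_pos i with rfl | hipos
      · rw [if_pos rfl]; linarith [(hF1 j).2]
      · rw [if_neg (by omega)]; exact hxnn _ _
    · intro j hj i hi hds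
      beta_reduce
      rcases Nat.eq_zero_or_pos i with rfl | hipos
      · rw [if_pos rfl]
        have := hF2 j (by intro hc; exact absurd hc.2 (not_le.2 hds))
        linarith [this]
      · rw [if_neg (by omega)]
        refine hadm j hj (i-1) (by omega) ?_
        have hieq : i - 1 + 1 = i := by omega
        beta_reduce
        rw [hieq]
        exact hds
    · beta_reduce
      rw [Finset.sum_range_succ', Finset.sum_range_succ']
      congr 1
      · have e1 : ∀ i ∈ Finset.range m,
            p (i+1) * (algStarFillAux d s n (List.range (m+1)) rem (i+1) / d (i+1))
              = p (i+1) * (algStarFillAux (fun k => d (k+1)) s n (List.range m) q.1 i / d (i+1)) := by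
          intro i _
          rw [fill_succ_succ]
        rw [Finset.sum_congr rfl e1, hval]
        apply Finset.sum_congr rfl
        intro i _
        simp
      · rw [fill_succ_zero]
        simp
        exact Or.inl rfl

end BinCov

namespace BinCov

lemma dual_exists (n : ℕ) (s : ℕ → ℝ) (hss : ∀ j j', j ≤ j' → j' < n → s j' ≤ s j) :
    ∀ (m : ℕ) (d p rem : ℕ → ℝ),
    (∀ i < m, 0 < d i) → (∀ i < m, 0 < p i) → (∀ j, 0 ≤ rem j) →
    (∀ i i', i ≤ i' → i' < m → p i' / d i' ≤ p i / d i) →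
    ∀ E : ℝ, 0 ≤ E → (∀ i < m, p i / d i ≤ E) →
    ∃ α β γ : ℕ → ℝ,
      (∀ i < m, 0 ≤ α i) ∧ (∀ i < m, 0 ≤ β i) ∧
      (∀ j < n, 0 ≤ γ j ∧ γ j ≤ E) ∧
      (∀ j j', j ≤ j' → j' < n → γ j ≤ γ j') ∧
      (∀ i < m, p i ≤ α i * d i + β i) ∧
      (∀ j < n, ∀ i < m, s j ≤ d i → α i ≤ γ j) ∧
      (∑ i ∈ Finset.range m, β i + ∑ j ∈ Finset.range n, γ j * rem j
        = ∑ i ∈ Finset.range m, p i * (algStarFillAux d s n (List.range m) rem i / d i)) := by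
  intro m
  induction m with
  | zero =>
    intro d p rem hd hp hrem heff E hE0 hE
    refine ⟨fun _ => 0, fun _ => 0, fun _ => 0, ?_, ?_, ?_, ?_, ?_, ?_, ?_⟩
    · intro i hi; omega
    · intro i hi; omega
    · intro j _; exact ⟨le_refl _, hE0⟩
    · intro j j' _ _; exact le_refl _
    · intro i hi; omega
    · intro j _ i hi; omega
    · simp
  | succ m ihm =>
    intro d p rem hd hp hrem heff E hE0 hE
    have hd0 : 0 < d 0 := hd 0 (Nat.succ_pos m)
    have hp0 : 0 < p 0 := hp 0 (Nat.succ_pos m)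
    have hE'0 : 0 < p 0 / d 0 := div_pos hp0 hd0
    obtain ⟨hF1, hF2, hF3, hF4, hF5⟩ :=
      fillBin_spec (s := s) (n := n) (dcap := d 0) n (d 0) rem (le_of_lt hd0) hrem
    set q := fillBin s n (d 0) n (d 0) rem with hqdef
    have hrem' : ∀ j, 0 ≤ q.1 j := fun j => (hF1 j).1
    obtain ⟨α', β', γ', hα', hβ', hγ'B, hγ'mono, hfeas1', hfeas2', hval'⟩ :=
      ihm (fun k => d (k+1)) (fun k => p (k+1)) q.1
        (fun i hi => hd (i+1) (by omega)) (fun i hi => hp (i+1) (by omega)) hrem'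
        (fun i i' hii' hi'm => heff (i+1) (i'+1) (by omega) (by omega))
        (p 0 / d 0) (le_of_lt hE'0)
        (fun i hi => heff 0 (i+1) (by omega) (by omega))
    -- choose α₀ β₀
    have key : ∃ α₀ β₀ : ℝ, 0 ≤ α₀ ∧ α₀ ≤ p 0 / d 0 ∧ 0 ≤ β₀ ∧ p 0 ≤ α₀ * d 0 + β₀ ∧
        (∀ j < n, (if s j ≤ d 0 then max (γ' j) α₀ else γ' j) * rem j
            = γ' j * q.1 j + α₀ * (rem j - q.1 j)) ∧
        β₀ + α₀ * q.2 = p 0 * (q.2 / d 0) := by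
      by_cases hcov : q.2 = d 0
      · -- covered
        set C := (Finset.range n).filter (fun j => q.1 j < rem j) with hCdef
        have hCne : C.Nonempty := by
          by_contra hne
          rw [Finset.not_nonempty_iff_eq_empty] at hne
          have : q.2 = 0 := by
            rw [hF3]
            apply Finset.sum_eq_zero
            intro j hj
            have hnotin : j ∉ C := by rw [hne]; exact Finset.notMem_empty j
            rw [hCdef, Finset.mem_filter] at hnotin
            push_neg at hnotin
            have := hnotin hj
            have h2 := (hF1 j).2
            linarith [le_antisymm h2 this]
          rw [hcov] at this
          linarith
        set jC := C.max' hCne with hjCdef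
        have hjCmem : jC ∈ C := C.max'_mem hCne
        have hjCn : jC < n := by
          have := hjCmem; rw [hCdef, Finset.mem_filter] at this
          exact Finset.mem_range.1 this.1
        have hjCtouch : q.1 jC < rem jC := by
          have := hjCmem; rw [hCdef, Finset.mem_filter] at this; exact this.2
        have hjCadm : s jC ≤ d 0 := by
          by_contra hc
          have := hF2 jC (by intro hcc; exact hc hcc.2)
          linarith
        have hα₀d : γ' jC * d 0 ≤ p 0 := by
          have := (hγ'B jC hjCn).2
          rw [le_div_iff₀ hd0] at this
          exact this
        refine ⟨γ' jC, p 0 - γ' jC * d 0, (hγ'B jC hjCn).1, (hγ'B jC hjCn).2,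
          by linarith, le_of_eq (by ring), ?_, ?_⟩
        · intro j hj
          by_cases hadm : s j ≤ d 0
          · rw [if_pos hadm]
            by_cases htouch : q.1 j < rem j
            · -- consumed
              have hjmem : j ∈ C := by
                rw [hCdef, Finset.mem_filter]; exact ⟨Finset.mem_range.2 hj, htouch⟩
              have hjle : j ≤ jC := C.le_max' j hjmem
              have hγle : γ' j ≤ γ' jC := hγ'mono j jC hjle hjCn
              rw [max_eq_right hγle]
              rcases eq_or_lt_of_le (hF1 j).1 with hq0 | hqpos
              · rw [← hq0]; ring
              · -- 0 < q.1 j: then j = jC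
                have hjeq : j = jC := by
                  rcases lt_or_eq_of_le hjle with hlt | heq
                  · exfalso
                    have := hF5 j jC hlt hj hadm hjCn hjCadm hqpos
                    linarith
                  · exact heq
                rw [hjeq]
                ring
            · -- untouched: q.1 j = rem j
              have heq : q.1 j = rem j := le_antisymm (hF1 j).2 (not_lt.1 htouch)
              rcases eq_or_lt_of_le (hrem j) with hr0 | hrpos
              · rw [← hr0, heq, ← hr0]; ring
              · have hqpos : 0 < q.1 j := by rw [heq]; exact hrpos
                have hjge : jC ≤ j := by
                  by_contra hc
                  push_neg at hc
                  have := hF5 j jC hc hj hadm hjCn hjCadm hqpos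
                  linarith
                have hγge : γ' jC ≤ γ' j := hγ'mono jC j hjge hj
                rw [max_eq_left hγge, heq]
                ring
          · rw [if_neg hadm]
            have heq : q.1 j = rem j := hF2 j (by intro hcc; exact hadm hcc.2)
            rw [heq]
            ring
        · rw [hcov]
          field_simp
          ring
      · -- uncovered
        have hexh : ∀ j < n, s j ≤ d 0 → q.1 j = 0 := by
          have := fillBin_complete (s := s) (n := n) (dcap := d 0) n (d 0) rem hrem
            (by
              calc ((Finset.range n).filter (fun j => s j ≤ d 0 ∧ 0 < rem j)).card
                  ≤ (Finset.range n).card := Finset.card_filter_le _ _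
                _ = n := Finset.card_range n)
          rcases this with h1 | h1
          · exact absurd h1 hcov
          · exact h1
        refine ⟨p 0 / d 0, 0, le_of_lt hE'0, le_refl _, le_refl _,
          le_of_eq (by rw [add_zero, div_mul_cancel₀ _ hd0.ne']), ?_, ?_⟩
        · intro j hj
          by_cases hadm : s j ≤ d 0
          · rw [if_pos hadm, hexh j hj hadm]
            rw [max_eq_right ((hγ'B j hj).2)]
            ring
          · rw [if_neg hadm]
            have heq : q.1 j = rem j := hF2 j (by intro hcc; exact hadm hcc.2)
            rw [heq]
            ring
        · rw [zero_add, div_mul_eq_mul_div, mul_div_assoc]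
    obtain ⟨α₀, β₀, hα₀nn, hα₀le, hβ₀nn, hfeas0, hitemid, hβval⟩ := key
    refine ⟨fun i => if i = 0 then α₀ else α' (i-1),
            fun i => if i = 0 then β₀ else β' (i-1),
            fun j => if s j ≤ d 0 then max (γ' j) α₀ else γ' j,
            ?_, ?_, ?_, ?_, ?_, ?_, ?_⟩
    · intro i hi
      beta_reduce
      rcases Nat.eq_zero_or_pos i with rfl | hipos
      · rw [if_pos rfl]; exact hα₀nn
      · rw [if_neg (by omega)]; exact hα' (i-1) (by omega)
    · intro i hi
      beta_reduce
      rcases Nat.eq_zero_or_pos i with rfl | hipos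
      · rw [if_pos rfl]; exact hβ₀nn
      · rw [if_neg (by omega)]; exact hβ' (i-1) (by omega)
    · intro j hj
      beta_reduce
      have hEE : p 0 / d 0 ≤ E := hE 0 (Nat.succ_pos m)
      by_cases hadm : s j ≤ d 0
      · rw [if_pos hadm]
        constructor
        · exact le_trans (hγ'B j hj).1 (le_max_left _ _)
        · exact max_le (le_trans (hγ'B j hj).2 hEE) (le_trans hα₀le hEE)
      · rw [if_neg hadm]
        exact ⟨(hγ'B j hj).1, le_trans (hγ'B j hj).2 hEE⟩
    · intro j j' hjj' hj'n
      beta_reduce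
      by_cases hadm : s j ≤ d 0
      · have hadm' : s j' ≤ d 0 := le_trans (hss j j' hjj' hj'n) hadm
        rw [if_pos hadm, if_pos hadm']
        exact max_le_max (hγ'mono j j' hjj' hj'n) (le_refl _)
      · rw [if_neg hadm]
        by_cases hadm' : s j' ≤ d 0
        · rw [if_pos hadm']
          exact le_trans (hγ'mono j j' hjj' hj'n) (le_max_left _ _)
        · rw [if_neg hadm']
          exact hγ'mono j j' hjj' hj'n
    · intro i hi
      beta_reduce
      rcases Nat.eq_zero_or_pos i with rfl | hipos
      · rw [if_pos rfl, if_pos rfl]; exact hfeas0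
      · rw [if_neg (by omega), if_neg (by omega)]
        have := hfeas1' (i-1) (by omega)
        have hieq : i - 1 + 1 = i := by omega
        beta_reduce at this
        rw [hieq] at this
        exact this
    · intro j hj i hi hsd
      beta_reduce
      rcases Nat.eq_zero_or_pos i with rfl | hipos
      · rw [if_pos rfl, if_pos hsd]
        exact le_max_right _ _
      · rw [if_neg (by omega)]
        have hsd' : s j ≤ (fun k => d (k+1)) (i-1) := by
          beta_reduce
          have hieq : i - 1 + 1 = i := by omega
          rw [hieq]
          exact hsd
        have h1 := hfeas2' j hj (i-1) (by omega) hsd'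
        by_cases hadm : s j ≤ d 0
        · rw [if_pos hadm]
          exact le_trans h1 (le_max_left _ _)
        · rw [if_neg hadm]
          exact h1
    · beta_reduce
      rw [Finset.sum_range_succ']
      have hsimpβ : (∑ i ∈ Finset.range m, if i + 1 = 0 then β₀ else β' (i+1-1))
          = ∑ i ∈ Finset.range m, β' i := by
        apply Finset.sum_congr rfl
        intro i _
        simp
      rw [hsimpβ, if_pos rfl]
      have hγsum : (∑ j ∈ Finset.range n, (if s j ≤ d 0 then max (γ' j) α₀ else γ' j) * rem j)
          = ∑ j ∈ Finset.range n, γ' j * q.1 j + α₀ * q.2 := by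
        rw [hF3, Finset.mul_sum, ← Finset.sum_add_distrib]
        apply Finset.sum_congr rfl
        intro j hj
        exact hitemid j (Finset.mem_range.1 hj)
      rw [hγsum, Finset.sum_range_succ']
      have hfill : ∀ i ∈ Finset.range m,
          p (i+1) * (algStarFillAux d s n (List.range (m+1)) rem (i+1) / d (i+1))
            = p (i+1) * (algStarFillAux (fun k => d (k+1)) s n (List.range m) q.1 i / d (i+1)) :=
        fun i _ => by rw [fill_succ_succ]
      rw [Finset.sum_congr rfl hfill, fill_succ_zero]
      have hval'' : ∑ i ∈ Finset.range m, β' i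
          + ∑ j ∈ Finset.range n, γ' j * q.1 j
          = ∑ i ∈ Finset.range m, p (i+1) * (algStarFillAux (fun k => d (k+1)) s n (List.range m) q.1 i / d (i+1)) := hval'
      linarith [hβval]

end BinCov

namespace BinCov

lemma fill_bounds (n : ℕ) (s : ℕ → ℝ) : ∀ (m : ℕ) (d rem : ℕ → ℝ),
    (∀ i < m, 0 < d i) → (∀ j, 0 ≤ rem j) → ∀ i < m,
    0 ≤ algStarFillAux d s n (List.range m) rem i ∧
      algStarFillAux d s n (List.range m) rem i ≤ d i := by
  intro m
  induction m with
  | zero => intro d rem _ _ i hi; omega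
  | succ m ihm =>
    intro d rem hd hrem i hi
    have hd0 : 0 < d 0 := hd 0 (Nat.succ_pos m)
    obtain ⟨hF1, hF2, hF3, hF4, hF5⟩ :=
      fillBin_spec (s := s) (n := n) (dcap := d 0) n (d 0) rem (le_of_lt hd0) hrem
    rcases Nat.eq_zero_or_pos i with rfl | hipos
    · rw [fill_succ_zero]
      constructor
      · rw [hF3]
        apply Finset.sum_nonneg
        intro j _
        linarith [(hF1 j).2, (hF1 j).1]
      · exact hF4
    · obtain ⟨i', rfl⟩ : ∃ i', i = i' + 1 := ⟨i - 1, by omega⟩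
      rw [fill_succ_succ]
      have := ihm (fun k => d (k+1)) (fillBin s n (d 0) n (d 0) rem).1
        (fun k hk => hd (k+1) (by omega)) (fun j => (hF1 j).1) i' (by omega)
      exact this

end BinCov

namespace BinCov

theorem stmt2' (m n : ℕ) (d p s : ℕ → ℝ)
    (hd : ∀ i < m, 0 < d i) (hp : ∀ i < m, 0 < p i) (hs : ∀ j < n, 0 < s j)
    (heff : ∀ i i', i ≤ i' → i' < m → p i' / d i' ≤ p i / d i)
    (hss : ∀ j j', j ≤ j' → j' < n → s j' ≤ s j) :
    algStarPStar m n d p s = LPOpt m n d p s := by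
  set rem₀ : ℕ → ℝ := fun j => if j < n then s j else 0 with hrem₀def
  have hrem₀ : ∀ j, 0 ≤ rem₀ j := by
    intro j
    by_cases hj : j < n
    · simp only [hrem₀def, if_pos hj]
      exact le_of_lt (hs j hj)
    · simp only [hrem₀def, if_neg hj, le_refl]
  have hfillagree : ∀ i, algStarFill m n d s i = algStarFillAux d s n (List.range m) rem₀ i :=
    fun i => rfl
  have hbounds := fill_bounds n s m d rem₀ hd hrem₀
  have halg : algStarPStar m n d p s
      = ∑ i ∈ Finset.range m, p i * (algStarFillAux d s n (List.range m) rem₀ i / d i) := by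
    unfold algStarPStar
    apply Finset.sum_congr rfl
    intro i hi
    rw [Finset.mem_range] at hi
    rw [hfillagree i]
    congr 1
    exact min_eq_left ((div_le_one (hd i hi)).2 (hbounds i hi).2)
  have hset : LPOpt m n d p s = sSup (VsetG m n d p s rem₀) := by
    unfold LPOpt VsetG
    congr 1
    ext v
    constructor
    · rintro ⟨y, x, h1, h2, h3, h4, h5, h6⟩
      refine ⟨y, x, h1, fun j hj => ?_, h3, h4, h5, h6⟩
      show ∑ i ∈ Finset.range m, x j i ≤ if j < n then s j else 0
      rw [if_pos hj]
      exact h2 j hj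
    · rintro ⟨y, x, h1, h2, h3, h4, h5, h6⟩
      refine ⟨y, x, h1, fun j hj => ?_, h3, h4, h5, h6⟩
      have := h2 j hj
      rw [hrem₀def] at this
      simp only [if_pos hj] at this
      exact this
  have hmem := primal_mem n s m d p rem₀ hd hrem₀
  set E : ℝ := max 0 (p 0 / d 0) with hEdef
  have hE0 : 0 ≤ E := le_max_left _ _
  have hEbd : ∀ i < m, p i / d i ≤ E := by
    intro i hi
    exact le_trans (heff 0 i (Nat.zero_le i) hi) (le_max_right _ _)
  obtain ⟨α, β, γ, hα, hβ, hγB, hγmono, hfeas1, hfeas2, hvaleq⟩ :=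
    dual_exists n s hss m d p rem₀ hd hp hrem₀ heff E hE0 hEbd
  have hub : ∀ v ∈ VsetG m n d p s rem₀,
      v ≤ ∑ i ∈ Finset.range m, p i * (algStarFillAux d s n (List.range m) rem₀ i / d i) := by
    intro v hv
    rw [← hvaleq]
    exact weak_duality hv hd hrem₀ α β γ hα hβ (fun j hj => (hγB j hj).1)
      hfeas1 hfeas2
  rw [halg, hset]
  apply le_antisymm
  · exact le_csSup ⟨_, hub⟩ hmem
  · exact csSup_le ⟨_, hmem⟩ hub

end BinCov


namespace BinCov

/- STATEMENT 2 -/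
theorem stmt2 (m n : ℕ) (d p s : ℕ → ℝ)
    (hd : ∀ i < m, 0 < d i) (hp : ∀ i < m, 0 < p i) (hs : ∀ j < n, 0 < s j)
    (heff : ∀ i i', i ≤ i' → i' < m → p i' / d i' ≤ p i / d i)
    (hss : ∀ j j', j ≤ j' → j' < n → s j' ≤ s j) :
    algStarPStar m n d p s = LPOpt m n d p s :=
  stmt2' m n d p s hd hp hs heff hss

end BinCov
end
end

section
/- For every ε with 0 < ε < 2/3 there is an instance on which the approximation ratio of NFD is at least (9 − 6ε)/4: for the instance with four bins of demands 4, 3−2ε, 3−2ε, 3−2ε and six items of sizes 2−ε, 2−ε, 2−ε, 1−ε, 1−ε, 1−ε, one has NFD(I,J) = 4 and OPT(I,J) = 9 − 6ε. -/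
open scoped Classical

noncomputable section

namespace BinCov

/- STATEMENT 7 -/
theorem stmt7 (ε : ℝ) (h0 : 0 < ε) (h1 : ε < 2 / 3) :
    NFD (fun i => if i = 0 then 4 else 3 - 2 * ε) (fun j => if j < 3 then 2 - ε else 1 - ε)
        (Finset.range 4) (Finset.range 6) = 4 ∧
    OPT (fun i => if i = 0 then 4 else 3 - 2 * ε) (fun i => if i = 0 then 4 else 3 - 2 * ε)
        (fun j => if j < 3 then 2 - ε else 1 - ε) (Finset.range 4) (Finset.range 6)
      = 9 - 6 * ε := by
  set d : ℕ → ℝ := fun i => if i = 0 then 4 else 3 - 2 * ε with hd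
  set s : ℕ → ℝ := fun j => if j < 3 then 2 - ε else 1 - ε with hs
  have hA : ¬ ((4:ℝ) ≤ 2 - ε) := by intro h; linarith
  have hB : ¬ ((4:ℝ) - (2 - ε) ≤ 2 - ε) := by intro h; linarith
  have hC : (4:ℝ) - (2 - ε) - (2 - ε) ≤ 2 - ε := by linarith
  have tf : takeFill s 4 [0,1,2,3,4,5] = ([0,1,2],[3,4,5]) := by
    simp [takeFill, hs, hA, hB, hC]
  have hD : (4:ℝ) ≤ ([0,1,2,3,4,5].map s).sum := by
    simp [hs]; linarith
  have hE : ¬ ((3:ℝ) - 2*ε ≤ ([3,4,5].map s).sum) := by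
    simp [hs]; linarith
  have hsol : ∀ b, nfdSol d s (Finset.range 4) (Finset.range 6) b
      = if b = 0 then ({0,1,2} : Finset ℕ) else ∅ := by
    intro b
    have h4 : (Finset.range 4).sort (· ≤ ·) = [0,1,2,3] := by
      rw [Finset.sort_range]; decide
    have h6 : (Finset.range 6).sort (· ≤ ·) = [0,1,2,3,4,5] := by
      rw [Finset.sort_range]; decide
    rw [nfdSol, h4, h6]
    rw [nfdAux]
    have hd0 : d 0 = 4 := by simp [hd]
    have hd1 : d 1 = 3 - 2*ε := by simp [hd]
    have hd2 : d 2 = 3 - 2*ε := by simp [hd]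
    have hd3 : d 3 = 3 - 2*ε := by simp [hd]
    rw [hd0, if_pos hD, tf]
    by_cases hb : b = 0
    · simp [hb]
    · simp only [hb, if_false]
      rw [nfdAux, hd1, if_neg hE]
      by_cases hb1 : b = 1
      · simp [hb1]
      · simp only [hb1, if_false]
        rw [nfdAux, hd2, if_neg hE]
        by_cases hb2 : b = 2
        · simp [hb2]
        · simp only [hb2, if_false]
          rw [nfdAux, hd3, if_neg hE]
          by_cases hb3 : b = 3
          · simp [hb3]
          · simp only [hb3, if_false]
            rw [nfdAux]
  have e0 : nfdSol d s (Finset.range 4) (Finset.range 6) 0 = {0,1,2} := by rw [hsol]; simp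
  have e1 : nfdSol d s (Finset.range 4) (Finset.range 6) 1 = ∅ := by rw [hsol]; simp
  have e2 : nfdSol d s (Finset.range 4) (Finset.range 6) 2 = ∅ := by rw [hsol]; simp
  have e3 : nfdSol d s (Finset.range 4) (Finset.range 6) 3 = ∅ := by rw [hsol]; simp
  have c0 : d 0 ≤ ∑ j ∈ ({0,1,2} : Finset ℕ), s j := by
    simp [hd, hs]; linarith
  have cempty : ∀ i : ℕ, i ≠ 0 → ¬ (d i ≤ ∑ j ∈ (∅ : Finset ℕ), s j) := by
    intro i hi
    simp [hd, hi]; linarith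
  have hNFD : NFD d s (Finset.range 4) (Finset.range 6) = 4 := by
    rw [NFD, profit, Finset.sum_range_succ, Finset.sum_range_succ, Finset.sum_range_succ,
      Finset.sum_range_succ, Finset.sum_range_zero, e0, e1, e2, e3,
      if_pos c0, if_neg (cempty 1 (by norm_num)), if_neg (cempty 2 (by norm_num)),
      if_neg (cempty 3 (by norm_num))]
    simp [hd]
  have hsum6 : ∑ j ∈ Finset.range 6, s j = 9 - 6*ε := by
    rw [Finset.sum_range_succ, Finset.sum_range_succ, Finset.sum_range_succ,
      Finset.sum_range_succ, Finset.sum_range_succ, Finset.sum_range_succ, Finset.sum_range_zero]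
    simp [hs]; ring
  set S0 : ℕ → Finset ℕ := fun i =>
    if i = 1 then {0,3} else if i = 2 then {1,4} else if i = 3 then {2,5} else ∅ with hS0
  have hS0sol : IsSolution (Finset.range 6) S0 := by
    constructor
    · intro i
      simp only [hS0]
      split_ifs <;> intro j hj <;> simp_all <;> omega
    · intro i i' hne
      simp only [hS0]
      split_ifs <;> simp_all
  have v1 : ∑ j ∈ S0 1, s j = 3 - 2*ε := by simp [hS0, hs]; ring
  have v2 : ∑ j ∈ S0 2, s j = 3 - 2*ε := by simp [hS0, hs]; ring
  have v3 : ∑ j ∈ S0 3, s j = 3 - 2*ε := by simp [hS0, hs]; ring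
  have hprofitS0 : profit d d s (Finset.range 4) S0 = 9 - 6*ε := by
    rw [profit, Finset.sum_range_succ, Finset.sum_range_succ, Finset.sum_range_succ,
      Finset.sum_range_succ, Finset.sum_range_zero, v1, v2, v3]
    have hS00 : S0 0 = ∅ := by simp [hS0]
    rw [hS00, if_neg (show ¬ (d 0 ≤ ∑ j ∈ (∅ : Finset ℕ), s j) by norm_num [hd])]
    have hd1 : d 1 = 3 - 2*ε := by simp [hd]
    have hd2 : d 2 = 3 - 2*ε := by simp [hd]
    have hd3 : d 3 = 3 - 2*ε := by simp [hd]
    rw [hd1, hd2, hd3, if_pos le_rfl]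
    ring
  have hsnn : ∀ j, 0 ≤ s j := by
    intro j; rw [hs]; dsimp only; split <;> linarith
  have hub : ∀ S, IsSolution (Finset.range 6) S →
      profit d d s (Finset.range 4) S ≤ 9 - 6*ε := by
    intro S hSl
    have step1 : profit d d s (Finset.range 4) S ≤ ∑ i ∈ Finset.range 4, ∑ j ∈ S i, s j := by
      apply Finset.sum_le_sum
      intro i _
      split
      · assumption
      · exact Finset.sum_nonneg fun j _ => hsnn j
    have hpd : (↑(Finset.range 4) : Set ℕ).PairwiseDisjoint S :=
      fun i _ i' _ hne => hSl.2 hne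
    have step2 : ∑ i ∈ Finset.range 4, ∑ j ∈ S i, s j
        = ∑ j ∈ (Finset.range 4).biUnion S, s j := (Finset.sum_biUnion hpd).symm
    have hsub : (Finset.range 4).biUnion S ⊆ Finset.range 6 := by
      intro j hj
      rw [Finset.mem_biUnion] at hj
      obtain ⟨i, -, hji⟩ := hj
      exact hSl.1 i hji
    have step3 : ∑ j ∈ (Finset.range 4).biUnion S, s j ≤ ∑ j ∈ Finset.range 6, s j :=
      Finset.sum_le_sum_of_subset_of_nonneg hsub fun j _ _ => hsnn j
    linarith [hsum6, step1, step2.le, step3]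
  have hmem : (9 - 6*ε) ∈ profit d d s (Finset.range 4) '' {S | IsSolution (Finset.range 6) S} :=
    ⟨S0, hS0sol, hprofitS0⟩
  have hbdd : ∀ v ∈ profit d d s (Finset.range 4) '' {S | IsSolution (Finset.range 6) S},
      v ≤ 9 - 6*ε := by
    rintro v ⟨S, hSl, rfl⟩
    exact hub S hSl
  have hOPT : OPT d d s (Finset.range 4) (Finset.range 6) = 9 - 6*ε := by
    rw [OPT]
    exact le_antisymm (csSup_le ⟨_, hmem⟩ hbdd) (le_csSup ⟨9 - 6*ε, hbdd⟩ hmem)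
  exact ⟨hNFD, hOPT⟩


end BinCov
end
end

section
/- In the solution S = (S_i) produced by NFD on any instance of Variable-Sized Bin Covering with unit supply, if s(S_i) ≥ 2·d_i for some bin i, then |S_i| = 1. -/
open scoped Classical

noncomputable section

namespace BinCov

lemma takeFill_append (s : ℕ → ℝ) : ∀ (dem : ℝ) (l : List ℕ),
    (takeFill s dem l).1 ++ (takeFill s dem l).2 = l
  | _, [] => rfl
  | dem, j :: rest => by
    simp only [takeFill]
    split
    · rfl
    · simp [takeFill_append s (dem - s j) rest]

lemma takeFill_sum_lt (s : ℕ → ℝ) : ∀ (dem : ℝ) (l : List ℕ),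
    0 < dem → (∀ j ∈ l, 0 < s j) → l.Pairwise (fun a b => s b ≤ s a) →
    2 ≤ (takeFill s dem l).1.length → (((takeFill s dem l).1).map s).sum < 2 * dem
  | dem, [], _, _, _, hlen => by simp [takeFill] at hlen
  | dem, j :: rest, hdem, hpos, hpair, hlen => by
    by_cases h : dem ≤ s j
    · simp [takeFill, h] at hlen
    · push_neg at h
      simp only [takeFill, if_neg (not_le.mpr h)] at hlen ⊢
      set q := takeFill s (dem - s j) rest with hq
      simp only [List.length_cons] at hlen
      have hq1 : 1 ≤ q.1.length := by omega
      rcases eq_or_lt_of_le hq1 with h1 | h1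
      · -- q.1 is a singleton
        obtain ⟨j', hj'⟩ := List.length_eq_one_iff.mp h1.symm
        have hj'mem : j' ∈ rest := by
          have := takeFill_append s (dem - s j) rest
          rw [← hq] at this
          rw [← this, hj']
          simp
        have hle : s j' ≤ s j := (List.pairwise_cons.mp hpair).1 j' hj'mem
        rw [hj']
        simp only [List.map_cons, List.map_nil, List.sum_cons, List.sum_nil]
        linarith
      · have IH := takeFill_sum_lt s (dem - s j) rest (by linarith)
          (fun a ha => hpos a (List.mem_cons_of_mem _ ha)) (List.pairwise_cons.mp hpair).2
          (by rw [← hq]; omega)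
        rw [← hq] at IH
        have hsj : 0 < s j := hpos j (List.mem_cons_self)
        simp only [List.map_cons, List.sum_cons]
        linarith

lemma nfdAux_spec (d s : ℕ → ℝ) : ∀ (L l : List ℕ) (b : ℕ),
    nfdAux d s L l b = ∅ ∨
    ∃ l', l' <:+ l ∧ d b ≤ (l'.map s).sum ∧
      nfdAux d s L l b = (takeFill s (d b) l').1.toFinset
  | [], _, _ => Or.inl rfl
  | i :: L, l, b => by
    by_cases hc : d i ≤ (l.map s).sum
    · by_cases hb : b = i
      · subst hb
        exact Or.inr ⟨l, List.suffix_rfl, hc, by simp [nfdAux, hc]⟩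
      · rcases nfdAux_spec d s L (takeFill s (d i) l).2 b with h | ⟨l', hsuf, hsum, heq⟩
        · exact Or.inl (by simp [nfdAux, hc, hb, h])
        · exact Or.inr ⟨l', hsuf.trans ⟨(takeFill s (d i) l).1, takeFill_append s (d i) l⟩,
            hsum, by simp [nfdAux, hc, hb, heq]⟩
    · by_cases hb : b = i
      · exact Or.inl (by simp [nfdAux, hc, hb])
      · rcases nfdAux_spec d s L l b with h | ⟨l', hsuf, hsum, heq⟩
        · exact Or.inl (by simp [nfdAux, hc, hb, h])
        · exact Or.inr ⟨l', hsuf, hsum, by simp [nfdAux, hc, hb, heq]⟩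

/- STATEMENT 8 -/
theorem stmt8 (m n : ℕ) (d s : ℕ → ℝ)
    (hd : ∀ i < m, 0 < d i) (hdm : ∀ i i', i ≤ i' → i' < m → d i' ≤ d i)
    (hs : ∀ j < n, 0 < s j) (hsm : ∀ j j', j ≤ j' → j' < n → s j' ≤ s j)
    (i : ℕ) (hi : i < m)
    (h2 : 2 * d i ≤ nfdU d s (Finset.range m) (Finset.range n) i) :
    (nfdSol d s (Finset.range m) (Finset.range n) i).card = 1 := by
  have hdi : 0 < d i := hd i hi
  set L := (Finset.range n).sort (· ≤ ·) with hL
  have hLnodup : L.Nodup := Finset.sort_nodup _ _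
  have hLsorted : L.Pairwise (· ≤ ·) := Finset.pairwise_sort _ _
  have hLmem : ∀ j ∈ L, j < n := fun j hj =>
    Finset.mem_range.mp ((Finset.mem_sort _).mp hj)
  have hSol : nfdSol d s (Finset.range m) (Finset.range n) i =
      nfdAux d s ((Finset.range m).sort (· ≤ ·)) L i := rfl
  have hU : nfdU d s (Finset.range m) (Finset.range n) i =
      ∑ j ∈ nfdSol d s (Finset.range m) (Finset.range n) i, s j := rfl
  rcases nfdAux_spec d s ((Finset.range m).sort (· ≤ ·)) L i with h | ⟨l', hsuf, hsum, heq⟩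
  · rw [hU, hSol, h] at h2
    simp at h2
    linarith
  · rw [hSol, heq] at hU ⊢
    set P := (takeFill s (d i) l').1 with hP
    have hPpre : P ++ (takeFill s (d i) l').2 = l' := takeFill_append s (d i) l'
    have hl'sub : l'.Sublist L := hsuf.sublist
    have hl'nodup : l'.Nodup := hLnodup.sublist hl'sub
    have hl'mem : ∀ j ∈ l', j < n := fun j hj => hLmem j (hl'sub.mem hj)
    have hPnodup : P.Nodup := hl'nodup.sublist (hPpre ▸ List.sublist_append_left P _)
    have hsumeq : ∑ j ∈ P.toFinset, s j = (P.map s).sum := by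
      rw [List.sum_toFinset _ hPnodup]
    have hcard : P.toFinset.card = P.length := List.toFinset_card_of_nodup hPnodup
    rw [hU, hsumeq] at h2
    have hpair : l'.Pairwise (fun a b => s b ≤ s a) := by
      refine (hLsorted.sublist hl'sub).imp_of_mem ?_
      intro a b ha hb hab
      exact hsm a b hab (hl'mem b hb)
    have hpos : ∀ j ∈ l', 0 < s j := fun j hj => hs j (hl'mem j hj)
    have hne : P ≠ [] := by
      intro hnil
      rw [hnil] at h2
      simp at h2
      linarith
    have h1 : 1 ≤ P.length := List.length_pos_iff.mpr hne
    rcases eq_or_lt_of_le h1 with h1 | h1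
    · rw [hcard, ← h1]
    · exfalso
      have := takeFill_sum_lt s (d i) l' hdi hpos hpair (by rw [← hP]; omega)
      rw [← hP] at this
      linarith

end BinCov
end
end
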